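/- For every nonnegative integer n and fixed t in (0,1/2), the sequence (2n+1) B_{2n}(t)/B_{2n+1}(t) is increasing in n; for fixed t in (1/2,1), it is decreasing in n. -/

import Mathlib

/-!
Write `φₙ = (-1)ⁿ⁺¹ B₂ₙ₊₁`, which is positive on `(0, 1/2)`; the sequence in question is
`φₙ' / φₙ`, so it increases exactly when the Wronskians `W(φₙ, φₙ₊₁) = φₙ φₙ₊₁' - φₙ' φₙ₊₁` are
positive. Since `φₙ₊₁'' = -(2n+2)(2n+3) φₙ` and `φₙ₊₁` vanishes at `0` and `1/2`, both `φₙ₊₁` and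
`φₙ₊₁'` are integrals of `φₙ` against the Green's function `G(t, w)` of `-d²/dt²` on `[0, 1/2]`
and against `∂ₜG(t, w)`. For fixed `t` the ratio `∂ₜG(t, ·) / G(t, ·)` is nondecreasing, so
symmetrising the resulting 2 × 2 determinant of integrals shows that `W(φₙ₊₁, φₙ₊₂) > 0` as soon
as `φₙ₊₁ / φₙ` is increasing, i.e. as soon as `W(φₙ, φₙ₊₁) > 0`. Induction on `n` settles
`(0, 1/2)`, and `B_k(1 - t) = (-1)ᵏ B_k(t)` turns this into the decreasing statement on `(1/2, 1)`.
-/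

open Set Real Filter

noncomputable def B (n : ℕ) (t : ℝ) : ℝ := Polynomial.aeval t (Polynomial.bernoulli n)

noncomputable def Bnum (n : ℕ) : ℝ := ((bernoulli n : ℚ) : ℝ)

open MeasureTheory

theorem integral_mul_sub_integral_mul_pos {α : Type*} [LinearOrder α] [MeasurableSpace α]
    {μ : Measure α} [SFinite μ] {a b p q : α → ℝ} {I s t : Set α}
    (hap : Integrable (fun x ↦ a x * p x) μ) (hbq : Integrable (fun x ↦ b x * q x) μ)
    (haq : Integrable (fun x ↦ a x * q x) μ) (hbp : Integrable (fun x ↦ b x * p x) μ)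
    (hI : ∀ᵐ x ∂μ, x ∈ I)
    (hab : ∀ x ∈ I, ∀ y ∈ I, x ≤ y → a x * b y ≤ a y * b x)
    (hpq : ∀ x ∈ I, ∀ y ∈ I, x ≤ y → p x * q y ≤ p y * q x)
    (hab_lt : ∀ x ∈ s, ∀ y ∈ t, a x * b y < a y * b x)
    (hpq_lt : ∀ x ∈ s, ∀ y ∈ t, p x * q y < p y * q x)
    (hs : μ s ≠ 0) (ht : μ t ≠ 0) :
    0 < (∫ x, a x * p x ∂μ) * (∫ x, b x * q x ∂μ) -
      (∫ x, a x * q x ∂μ) * (∫ x, b x * p x ∂μ) := by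
  -- `D` is nonnegative on `I × I` and its double integral is twice the determinant.
  set D : α × α → ℝ := fun z ↦
    (a z.2 * b z.1 - a z.1 * b z.2) * (p z.2 * q z.1 - p z.1 * q z.2)
  have hD : D = fun z ↦ (b z.1 * q z.1 * (a z.2 * p z.2) - b z.1 * p z.1 * (a z.2 * q z.2)) -
      (a z.1 * q z.1 * (b z.2 * p z.2) - a z.1 * p z.1 * (b z.2 * q z.2)) := by
    ext z; simp only [D]; ring
  have h₁ := (hbq.mul_prod hap).sub' (hbp.mul_prod haq)
  have h₂ := (haq.mul_prod hbp).sub' (hap.mul_prod hbq)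
  have hD_int : Integrable D (μ.prod μ) := hD ▸ h₁.sub' h₂
  have hD_eq : ∫ z, D z ∂μ.prod μ = 2 * ((∫ x, a x * p x ∂μ) * (∫ x, b x * q x ∂μ) -
      (∫ x, a x * q x ∂μ) * (∫ x, b x * p x ∂μ)) := by
    simp only [hD]
    rw [integral_sub h₁ h₂, integral_sub (hbq.mul_prod hap) (hbp.mul_prod haq),
      integral_sub (haq.mul_prod hbp) (hap.mul_prod hbq),
      integral_prod_mul (fun x ↦ b x * q x) (fun x ↦ a x * p x),
      integral_prod_mul (fun x ↦ b x * p x) (fun x ↦ a x * q x),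
      integral_prod_mul (fun x ↦ a x * q x) (fun x ↦ b x * p x),
      integral_prod_mul (fun x ↦ a x * p x) (fun x ↦ b x * q x)]
    ring
  have hD_nonneg : 0 ≤ᵐ[μ.prod μ] D := by
    filter_upwards [Measure.quasiMeasurePreserving_fst.ae hI,
      Measure.quasiMeasurePreserving_snd.ae hI] with z hz₁ hz₂
    rcases le_total z.1 z.2 with h | h
    · exact mul_nonneg (sub_nonneg.2 (hab _ hz₁ _ hz₂ h)) (sub_nonneg.2 (hpq _ hz₁ _ hz₂ h))
    · exact mul_nonneg_of_nonpos_of_nonpos (sub_nonpos.2 (hab _ hz₂ _ hz₁ h))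
        (sub_nonpos.2 (hpq _ hz₂ _ hz₁ h))
  have hD_pos : 0 < ∫ z, D z ∂μ.prod μ := by
    rw [integral_pos_iff_support_of_nonneg_ae hD_nonneg hD_int]
    refine lt_of_lt_of_le ?_ (measure_mono (s := s ×ˢ t) fun z hz ↦ ?_)
    · rw [Measure.prod_prod]
      exact ENNReal.mul_pos hs ht
    · exact (mul_pos (sub_pos.2 (hab_lt _ hz.1 _ hz.2)) (sub_pos.2 (hpq_lt _ hz.1 _ hz.2))).ne'
  linarith

theorem eq_zero_of_hasDerivAt_of_hasDerivAt_zero {h h' : ℝ → ℝ} {L : ℝ} (hL : L ≠ 0)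
    (hh : ∀ t, HasDerivAt h (h' t) t) (hh' : ∀ t, HasDerivAt h' 0 t) (hh₀ : h 0 = 0)
    (hhL : h L = 0) : h = 0 ∧ h' = 0 := by
  have h'_const (t : ℝ) : h' t = h' 0 :=
    is_const_of_deriv_eq_zero (fun t ↦ (hh' t).differentiableAt) (fun t ↦ (hh' t).deriv) t 0
  have h_linear (t : ℝ) : h t = h' 0 * t := by
    have hd (t : ℝ) : HasDerivAt (h - fun x ↦ h' 0 * x) 0 t := by
      simpa [h'_const t] using (hh t).sub ((hasDerivAt_id t).const_mul (h' 0))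
    have := is_const_of_deriv_eq_zero (fun t ↦ (hd t).differentiableAt) (fun t ↦ (hd t).deriv) t 0
    simp only [Pi.sub_apply, hh₀, mul_zero, sub_zero] at this
    linarith
  have h'_zero : h' 0 = 0 := by simpa [hL] using (h_linear L).symm.trans hhL
  exact ⟨funext fun t ↦ by simp [h_linear, h'_zero], funext fun t ↦ by simp [h'_const t, h'_zero]⟩

noncomputable def wronskian (f g : ℝ → ℝ) (t : ℝ) : ℝ := f t * deriv g t - deriv f t * g t

theorem strictMonoOn_div_of_wronskian_pos {p q : ℝ → ℝ} {s : Set ℝ} (hs : Convex ℝ s)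
    (hp : Differentiable ℝ p) (hq : Differentiable ℝ q) (hq0 : ∀ x ∈ s, q x ≠ 0)
    (hW : ∀ x ∈ interior s, 0 < wronskian q p x) :
    StrictMonoOn (fun x ↦ p x / q x) s := by
  refine strictMonoOn_of_deriv_pos hs
    (hp.continuous.continuousOn.div hq.continuous.continuousOn hq0) fun x hx ↦ ?_
  have hqx := hq0 x (interior_subset hx)
  rw [deriv_fun_div (hp x) (hq x) hqx]
  have := hW x hx
  rw [wronskian] at this
  exact div_pos (by linarith) (by positivity)

section Green

variable {L : ℝ} {f : ℝ → ℝ}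

noncomputable def greenKernel (L t w : ℝ) : ℝ := min t w * (L - max t w) / L

/-- `∂greenKernel L t w / ∂t`, for `w ≠ t`. -/
noncomputable def greenKernelDeriv (L t w : ℝ) : ℝ := (Ioi t).indicator 1 w - w / L

noncomputable def dirichletSolution (L : ℝ) (f : ℝ → ℝ) (t : ℝ) : ℝ :=
  ((L - t) * (∫ w in 0..t, w * f w) + t * ∫ w in t..L, (L - w) * f w) / L

noncomputable def dirichletSolutionDeriv (L : ℝ) (f : ℝ → ℝ) (t : ℝ) : ℝ :=
  ((∫ w in t..L, (L - w) * f w) - ∫ w in 0..t, w * f w) / L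

theorem hasDerivAt_integral_id_mul (hf : Continuous f) (t : ℝ) :
    HasDerivAt (fun u ↦ ∫ w in 0..u, w * f w) (t * f t) t :=
  ((continuous_id.mul hf).integral_hasStrictDerivAt 0 t).hasDerivAt

theorem hasDerivAt_integral_sub_mul (hf : Continuous f) (t : ℝ) :
    HasDerivAt (fun u ↦ ∫ w in u..L, (L - w) * f w) (-((L - t) * f t)) t := by
  have : (fun u ↦ ∫ w in u..L, (L - w) * f w) = fun u ↦ -∫ w in L..u, (L - w) * f w :=
    funext fun u ↦ intervalIntegral.integral_symm _ _
  rw [this]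
  exact (((continuous_const.sub continuous_id).mul hf).integral_hasStrictDerivAt L t).hasDerivAt.neg

theorem hasDerivAt_dirichletSolution (hf : Continuous f) (t : ℝ) :
    HasDerivAt (dirichletSolution L f) (dirichletSolutionDeriv L f t) t := by
  refine ((((hasDerivAt_id t).const_sub L).mul (hasDerivAt_integral_id_mul hf t)).add
    ((hasDerivAt_id t).mul (hasDerivAt_integral_sub_mul (L := L) hf t))).div_const L
    |>.congr_deriv ?_
  simp only [dirichletSolutionDeriv, id]
  ring

theorem hasDerivAt_dirichletSolutionDeriv (hL : L ≠ 0) (hf : Continuous f) (t : ℝ) :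
    HasDerivAt (dirichletSolutionDeriv L f) (-f t) t := by
  refine ((hasDerivAt_integral_sub_mul (L := L) hf t).sub
    (hasDerivAt_integral_id_mul hf t)).div_const L |>.congr_deriv ?_
  field_simp
  ring

theorem dirichletSolution_zero : dirichletSolution L f 0 = 0 := by simp [dirichletSolution]

theorem dirichletSolution_self : dirichletSolution L f L = 0 := by simp [dirichletSolution]

theorem eq_dirichletSolution {y y' : ℝ → ℝ} (hL : L ≠ 0) (hf : Continuous f)
    (hy : ∀ t, HasDerivAt y (y' t) t) (hy' : ∀ t, HasDerivAt y' (-f t) t)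
    (hy₀ : y 0 = 0) (hyL : y L = 0) :
    y = dirichletSolution L f ∧ y' = dirichletSolutionDeriv L f := by
  obtain ⟨h, h'⟩ := eq_zero_of_hasDerivAt_of_hasDerivAt_zero (h := y - dirichletSolution L f)
    (h' := y' - dirichletSolutionDeriv L f) hL
    (fun t ↦ (hy t).sub (hasDerivAt_dirichletSolution hf t))
    (fun t ↦ by simpa using (hy' t).sub (hasDerivAt_dirichletSolutionDeriv hL hf t))
    (by simp [hy₀, dirichletSolution_zero]) (by simp [hyL, dirichletSolution_self])
  exact ⟨sub_eq_zero.1 h, sub_eq_zero.1 h'⟩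

theorem continuous_greenKernel (L t : ℝ) : Continuous (greenKernel L t) := by
  unfold greenKernel; fun_prop

theorem dirichletSolution_eq_integral (hf : Continuous f) {t : ℝ} (ht : t ∈ Icc 0 L) :
    dirichletSolution L f t = ∫ w in 0..L, greenKernel L t w * f w := by
  have hc : Continuous fun w ↦ greenKernel L t w * f w := (continuous_greenKernel L t).mul hf
  rw [← intervalIntegral.integral_add_adjacent_intervals (b := t) (hc.intervalIntegrable _ _)
    (hc.intervalIntegrable _ _), dirichletSolution, add_div, mul_div_right_comm,
    mul_div_right_comm t, ← intervalIntegral.integral_const_mul,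
    ← intervalIntegral.integral_const_mul]
  congr 1 <;> refine intervalIntegral.integral_congr fun w hw ↦ ?_
  · rw [uIcc_of_le ht.1] at hw
    simp only [greenKernel, min_eq_right hw.2, max_eq_left hw.2]
    ring
  · rw [uIcc_of_le ht.2] at hw
    simp only [greenKernel, min_eq_left hw.1, max_eq_right hw.1]
    ring

theorem intervalIntegrable_greenKernelDeriv_mul (hf : Continuous f) (t a b : ℝ) :
    IntervalIntegrable (fun w ↦ greenKernelDeriv L t w * f w) volume a b := by
  have : (fun w ↦ greenKernelDeriv L t w * f w) =
      fun w ↦ (Ioi t).indicator f w - w / L * f w := by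
    ext w
    by_cases hw : w ∈ Ioi t <;> simp [greenKernelDeriv, hw, sub_mul]
  rw [this]
  refine IntervalIntegrable.sub ?_
    ((by fun_prop : Continuous fun w ↦ w / L * f w).intervalIntegrable a b)
  exact intervalIntegrable_iff.2 ((hf.intervalIntegrable a b).def'.indicator measurableSet_Ioi)

theorem dirichletSolutionDeriv_eq_integral (hL : L ≠ 0) (hf : Continuous f) {t : ℝ}
    (ht : t ∈ Icc 0 L) :
    dirichletSolutionDeriv L f t = ∫ w in 0..L, greenKernelDeriv L t w * f w := by
  rw [← intervalIntegral.integral_add_adjacent_intervals (b := t)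
    (intervalIntegrable_greenKernelDeriv_mul hf _ _ _)
    (intervalIntegrable_greenKernelDeriv_mul hf _ _ _), dirichletSolutionDeriv, sub_div,
    div_eq_inv_mul, div_eq_inv_mul, ← intervalIntegral.integral_const_mul,
    ← intervalIntegral.integral_const_mul, sub_eq_neg_add, ← intervalIntegral.integral_neg]
  congr 1 <;> refine intervalIntegral.integral_congr_ae (Eventually.of_forall fun w hw ↦ ?_)
  · rw [uIoc_of_le ht.1] at hw
    simp only [greenKernelDeriv, mem_Ioi, not_lt.2 hw.2, not_false_eq_true, indicator_of_notMem]
    ring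
  · rw [uIoc_of_le ht.2] at hw
    simp only [greenKernelDeriv, mem_Ioi, hw.1, indicator_of_mem, Pi.one_apply]
    field_simp

theorem eq_integral_greenKernel {y y' : ℝ → ℝ} (hL : L ≠ 0) (hf : Continuous f)
    (hy : ∀ t, HasDerivAt y (y' t) t) (hy' : ∀ t, HasDerivAt y' (-f t) t)
    (hy₀ : y 0 = 0) (hyL : y L = 0) {t : ℝ} (ht : t ∈ Icc 0 L) :
    y t = ∫ w in 0..L, greenKernel L t w * f w ∧
      y' t = ∫ w in 0..L, greenKernelDeriv L t w * f w := by
  obtain ⟨rfl, rfl⟩ := eq_dirichletSolution hL hf hy hy' hy₀ hyL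
  exact ⟨dirichletSolution_eq_integral hf ht, dirichletSolutionDeriv_eq_integral hL hf ht⟩

theorem greenKernel_pos {t w : ℝ} (ht : t ∈ Ioo 0 L) (hw : w ∈ Ioo 0 L) :
    0 < greenKernel L t w :=
  div_pos (mul_pos (lt_min ht.1 hw.1) (sub_pos.2 (max_lt ht.2 hw.2))) (ht.1.trans ht.2)

theorem integral_greenKernel_mul_pos (hf : Continuous f) (hpos : ∀ w ∈ Ioo 0 L, 0 < f w)
    {t : ℝ} (ht : t ∈ Ioo 0 L) : 0 < ∫ w in 0..L, greenKernel L t w * f w :=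
  intervalIntegral.intervalIntegral_pos_of_pos_on
    (((continuous_greenKernel L t).mul hf).intervalIntegrable _ _)
    (fun w hw ↦ mul_pos (greenKernel_pos ht hw) (hpos w hw)) (ht.1.trans ht.2)

theorem greenKernelDeriv_mul_greenKernel_le {t x y : ℝ} (ht : t ∈ Icc 0 L) (hx : x ∈ Icc 0 L)
    (hy : y ∈ Icc 0 L) (hxy : x ≤ y) :
    greenKernelDeriv L t x * greenKernel L t y ≤ greenKernelDeriv L t y * greenKernel L t x := by
  obtain ⟨ht₀, htL⟩ := ht; obtain ⟨hx₀, hxL⟩ := hx; obtain ⟨hy₀, hyL⟩ := hy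
  rcases le_or_gt y t with hyt | hty
  · simp only [greenKernelDeriv, greenKernel, min_eq_right hyt, max_eq_left hyt,
      min_eq_right (hxy.trans hyt), max_eq_left (hxy.trans hyt),
      indicator_of_notMem (show y ∉ Ioi t from not_lt.2 hyt),
      indicator_of_notMem (show x ∉ Ioi t from not_lt.2 (hxy.trans hyt))]
    exact le_of_eq (by ring)
  have hL : 0 < L := by linarith
  rcases le_or_gt x t with hxt | htx
  · simp only [greenKernelDeriv, greenKernel, min_eq_left hty.le, max_eq_right hty.le,
      min_eq_right hxt, max_eq_left hxt, indicator_of_mem (show y ∈ Ioi t from hty),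
      indicator_of_notMem (show x ∉ Ioi t from not_lt.2 hxt), Pi.one_apply]
    rw [← sub_nonneg]
    field_simp
    have hxy₀ := mul_nonneg hx₀ (sub_nonneg.2 hyL)
    nlinarith [mul_nonneg hxy₀ ht₀]
  · simp only [greenKernelDeriv, greenKernel, min_eq_left hty.le, max_eq_right hty.le,
      min_eq_left htx.le, max_eq_right htx.le, indicator_of_mem (show y ∈ Ioi t from hty),
      indicator_of_mem (show x ∈ Ioi t from htx), Pi.one_apply]
    exact le_of_eq (by field_simp)

theorem greenKernelDeriv_mul_greenKernel_lt {t x y : ℝ} (hx : 0 < x) (hxt : x < t)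
    (hty : t < y) (hy : y < L) :
    greenKernelDeriv L t x * greenKernel L t y < greenKernelDeriv L t y * greenKernel L t x := by
  have hL : 0 < L := by linarith
  simp only [greenKernelDeriv, greenKernel, min_eq_left hty.le, max_eq_right hty.le,
    min_eq_right hxt.le, max_eq_left hxt.le, indicator_of_mem (show y ∈ Ioi t from hty),
    indicator_of_notMem (show x ∉ Ioi t from not_lt.2 hxt.le), Pi.one_apply]
  rw [← sub_pos]
  field_simp
  nlinarith [mul_pos (mul_pos hx (sub_pos.2 hy)) (hx.trans hxt)]

end Green

theorem B_eq_bernoulliFun : B = bernoulliFun := by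
  ext k t
  simp [B, bernoulliFun, Polynomial.eval_map_algebraMap]

theorem bernoulliFun_three (x : ℝ) : bernoulliFun 3 x = x ^ 3 - 3 / 2 * x ^ 2 + 1 / 2 * x := by
  have : bernoulli 3 = 0 := bernoulli_eq_zero_of_odd (by decide) (by norm_num)
  simp [bernoulliFun, Polynomial.bernoulli_def, Finset.sum_range_succ, this]
  ring

/-- The sign makes `oddBernoulliFun n` positive on `(0, 1/2)`. -/
noncomputable def oddBernoulliFun (n : ℕ) (t : ℝ) : ℝ :=
  (-1) ^ (n + 1) * bernoulliFun (2 * n + 1) t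

theorem hasDerivAt_oddBernoulliFun (n : ℕ) (t : ℝ) :
    HasDerivAt (oddBernoulliFun n)
      ((-1) ^ (n + 1) * ((2 * n + 1) * bernoulliFun (2 * n) t)) t := by
  have := (hasDerivAt_bernoulliFun (2 * n + 1) t).const_mul ((-1 : ℝ) ^ (n + 1))
  rw [Nat.add_sub_cancel] at this
  push_cast at this
  exact this

theorem differentiable_oddBernoulliFun (n : ℕ) : Differentiable ℝ (oddBernoulliFun n) :=
  fun t ↦ (hasDerivAt_oddBernoulliFun n t).differentiableAt

theorem continuous_oddBernoulliFun (n : ℕ) : Continuous (oddBernoulliFun n) :=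
  (differentiable_oddBernoulliFun n).continuous

theorem deriv_oddBernoulliFun (n : ℕ) (t : ℝ) :
    deriv (oddBernoulliFun n) t = (-1) ^ (n + 1) * ((2 * n + 1) * bernoulliFun (2 * n) t) :=
  (hasDerivAt_oddBernoulliFun n t).deriv

theorem hasDerivAt_deriv_oddBernoulliFun_succ (n : ℕ) (t : ℝ) :
    HasDerivAt (deriv (oddBernoulliFun (n + 1)))
      (-((2 * n + 2) * (2 * n + 3) * oddBernoulliFun n t)) t := by
  rw [funext (deriv_oddBernoulliFun (n + 1))]
  refine ((hasDerivAt_bernoulliFun _ t).const_mul _).const_mul _ |>.congr_deriv ?_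
  simp only [oddBernoulliFun, show 2 * (n + 1) - 1 = 2 * n + 1 by omega]
  push_cast
  ring

theorem oddBernoulliFun_succ_zero (n : ℕ) : oddBernoulliFun (n + 1) 0 = 0 := by
  simp [oddBernoulliFun, bernoulliFun_eval_zero,
    bernoulli_eq_zero_of_odd (odd_two_mul_add_one (n + 1)) (by omega : 1 < 2 * (n + 1) + 1)]

theorem oddBernoulliFun_half (n : ℕ) : oddBernoulliFun n (1 / 2) = 0 := by
  simp [oddBernoulliFun, bernoulliFun_eval_half_eq_zero]

theorem oddBernoulliFun_succ_eq_integral (n : ℕ) {t : ℝ} (ht : t ∈ Icc 0 (1 / 2)) :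
    oddBernoulliFun (n + 1) t = (2 * n + 2) * (2 * n + 3) *
        ∫ w in 0..1 / 2, greenKernel (1 / 2) t w * oddBernoulliFun n w ∧
      deriv (oddBernoulliFun (n + 1)) t = (2 * n + 2) * (2 * n + 3) *
        ∫ w in 0..1 / 2, greenKernelDeriv (1 / 2) t w * oddBernoulliFun n w := by
  obtain ⟨h, h'⟩ := eq_integral_greenKernel (f := fun w ↦ (2 * n + 2) * (2 * n + 3) *
    oddBernoulliFun n w) (by norm_num) (continuous_const.mul (continuous_oddBernoulliFun n))
    (fun t ↦ (differentiable_oddBernoulliFun (n + 1) t).hasDerivAt)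
    (hasDerivAt_deriv_oddBernoulliFun_succ n) (oddBernoulliFun_succ_zero n)
    (oddBernoulliFun_half _) ht
  rw [h, h']
  simp only [mul_left_comm _ ((2 * n + 2 : ℝ) * (2 * n + 3)), intervalIntegral.integral_const_mul,
    and_self]

theorem oddBernoulliFun_pos (n : ℕ) {t : ℝ} (ht : t ∈ Ioo 0 (1 / 2)) :
    0 < oddBernoulliFun n t := by
  induction n generalizing t with
  | zero => simpa [oddBernoulliFun] using ht.2
  | succ n ih =>
    rw [(oddBernoulliFun_succ_eq_integral n (Ioo_subset_Icc_self ht)).1]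
    exact mul_pos (by positivity)
      (integral_greenKernel_mul_pos (continuous_oddBernoulliFun n) (fun w hw ↦ ih hw) ht)

theorem wronskian_oddBernoulliFun_zero (t : ℝ) :
    wronskian (oddBernoulliFun 0) (oddBernoulliFun 1) t = 2 * (1 / 2 - t) ^ 3 := by
  norm_num [wronskian, deriv_oddBernoulliFun, oddBernoulliFun, bernoulliFun_three]
  ring

theorem wronskian_oddBernoulliFun_succ_pos (n : ℕ)
    (hW : ∀ t ∈ Ioo (0 : ℝ) (1 / 2), 0 < wronskian (oddBernoulliFun n) (oddBernoulliFun (n + 1)) t)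
    {t : ℝ} (ht : t ∈ Ioo 0 (1 / 2)) :
    0 < wronskian (oddBernoulliFun (n + 1)) (oddBernoulliFun (n + 2)) t := by
  set I := Ioo (0 : ℝ) (1 / 2)
  set μ := volume.restrict I
  have hμ (F : ℝ → ℝ) : ∫ w in 0..1 / 2, F w = ∫ w, F w ∂μ := by
    rw [intervalIntegral.integral_of_le (by norm_num), integral_Ioc_eq_integral_Ioo]
  have hint {F : ℝ → ℝ} (hF : IntervalIntegrable F volume 0 (1 / 2)) : Integrable F μ :=
    hF.1.mono_set Ioo_subset_Ioc_self
  have hG (m : ℕ) : Integrable (fun w ↦ greenKernel (1 / 2) t w * oddBernoulliFun m w) μ :=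
    hint (((continuous_greenKernel _ t).mul (continuous_oddBernoulliFun m)).intervalIntegrable _ _)
  have hg (m : ℕ) : Integrable (fun w ↦ greenKernelDeriv (1 / 2) t w * oddBernoulliFun m w) μ :=
    hint (intervalIntegrable_greenKernelDeriv_mul (continuous_oddBernoulliFun m) _ _ _)
  have hpos : ∀ x ∈ I, 0 < oddBernoulliFun n x := fun x hx ↦ oddBernoulliFun_pos n hx
  have hmono : StrictMonoOn (fun x ↦ oddBernoulliFun (n + 1) x / oddBernoulliFun n x) I :=
    strictMonoOn_div_of_wronskian_pos (convex_Ioo _ _) (differentiable_oddBernoulliFun _)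
      (differentiable_oddBernoulliFun _) (fun x hx ↦ (hpos x hx).ne') (by rwa [interior_Ioo])
  have hlt : ∀ x ∈ I, ∀ y ∈ I, x < y → oddBernoulliFun (n + 1) x * oddBernoulliFun n y <
      oddBernoulliFun (n + 1) y * oddBernoulliFun n x := fun x hx y hy hxy ↦
    (div_lt_div_iff₀ (hpos x hx) (hpos y hy)).1 (hmono hx hy hxy)
  have hdet := integral_mul_sub_integral_mul_pos (hg (n + 1)) (hG n) (hg n) (hG (n + 1))
    (ae_restrict_mem measurableSet_Ioo)
    (fun x hx y hy hxy ↦ greenKernelDeriv_mul_greenKernel_le (Ioo_subset_Icc_self ht)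
      (Ioo_subset_Icc_self hx) (Ioo_subset_Icc_self hy) hxy)
    (fun x hx y hy hxy ↦ hxy.eq_or_lt.elim (fun h ↦ by rw [h]) fun h ↦ (hlt x hx y hy h).le)
    (s := Ioo 0 t) (t := Ioo t (1 / 2))
    (fun x hx y hy ↦ greenKernelDeriv_mul_greenKernel_lt hx.1 hx.2 hy.1 hy.2)
    (fun x hx y hy ↦ hlt x ⟨hx.1, hx.2.trans ht.2⟩ y ⟨ht.1.trans hy.1, hy.2⟩ (hx.2.trans hy.1))
    (by rw [Measure.restrict_eq_self _ (Ioo_subset_Ioo_right ht.2.le)]; simp [ht.1])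
    (by rw [Measure.restrict_eq_self _ (Ioo_subset_Ioo_left ht.1.le)]; simpa using ht.2)
  obtain ⟨h₁, h₁'⟩ := oddBernoulliFun_succ_eq_integral n (Ioo_subset_Icc_self ht)
  obtain ⟨h₂, h₂'⟩ := oddBernoulliFun_succ_eq_integral (n + 1) (Ioo_subset_Icc_self ht)
  have hc : (0 : ℝ) <
      (2 * n + 2) * (2 * n + 3) * ((2 * (n + 1 : ℕ) + 2) * (2 * (n + 1 : ℕ) + 3)) := by
    positivity
  rw [wronskian, h₁, h₁', h₂, h₂']
  simp only [hμ]
  linarith [mul_pos hc hdet]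

theorem wronskian_oddBernoulliFun_pos (n : ℕ) {t : ℝ} (ht : t ∈ Ioo 0 (1 / 2)) :
    0 < wronskian (oddBernoulliFun n) (oddBernoulliFun (n + 1)) t := by
  induction n generalizing t with
  | zero =>
    rw [wronskian_oddBernoulliFun_zero]
    have : 0 < 1 / 2 - t := by linarith [ht.2]
    positivity
  | succ n ih => exact wronskian_oddBernoulliFun_succ_pos n (fun _ ↦ ih) ht

noncomputable def bernoulliRatio (n : ℕ) (t : ℝ) : ℝ :=
  (2 * n + 1 : ℝ) * bernoulliFun (2 * n) t / bernoulliFun (2 * n + 1) t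

theorem bernoulliRatio_eq (n : ℕ) (t : ℝ) :
    bernoulliRatio n t = deriv (oddBernoulliFun n) t / oddBernoulliFun n t := by
  rw [deriv_oddBernoulliFun, oddBernoulliFun, mul_div_mul_left _ _ (by simp), bernoulliRatio]

theorem bernoulliRatio_lt_succ (n : ℕ) {t : ℝ} (ht : t ∈ Ioo 0 (1 / 2)) :
    bernoulliRatio n t < bernoulliRatio (n + 1) t := by
  rw [bernoulliRatio_eq, bernoulliRatio_eq,
    div_lt_div_iff₀ (oddBernoulliFun_pos n ht) (oddBernoulliFun_pos (n + 1) ht)]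
  have := wronskian_oddBernoulliFun_pos n ht
  rw [wronskian] at this
  linarith

theorem bernoulliRatio_one_sub (n : ℕ) (t : ℝ) :
    bernoulliRatio n (1 - t) = -bernoulliRatio n t := by
  simp [bernoulliRatio, bernoulliFun_eval_one_sub, pow_succ, div_neg]

theorem stmt4 (t : ℝ) :
    (t ∈ Ioo (0:ℝ) (1/2) → StrictMono (fun n : ℕ => (2*n+1 : ℝ) * B (2*n) t / B (2*n+1) t)) ∧
    (t ∈ Ioo (1/2:ℝ) 1 → StrictAnti (fun n : ℕ => (2*n+1 : ℝ) * B (2*n) t / B (2*n+1) t)) := by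
  simp only [B_eq_bernoulliFun]
  change (_ → StrictMono fun n ↦ bernoulliRatio n t) ∧
    (_ → StrictAnti fun n ↦ bernoulliRatio n t)
  refine ⟨fun ht ↦ strictMono_nat_of_lt_succ fun n ↦ bernoulliRatio_lt_succ n ht, fun ht ↦ ?_⟩
  have ht' : 1 - t ∈ Ioo (0 : ℝ) (1 / 2) := ⟨by linarith [ht.2], by linarith [ht.1]⟩
  have := (strictMono_nat_of_lt_succ fun n ↦ bernoulliRatio_lt_succ n ht').neg
  simpa only [bernoulliRatio_one_sub, sub_sub_cancel, neg_neg] using this
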